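/- (Representation of the (p,q)-Hermite polynomials) Define H_n(x; p, q) = ∑_{k=0}^{⌊n/2⌋} (−1)^k p^{(n−2k)(n−2k−1)/2 + k(k−1)} ([n]_{p,q}!/([2k]_{p,q}!! · [n−2k]_{p,q}!)) x^{n−2k}. Then for every real x, the generating identity ∑_{n=0}^{∞} H_n(x; p, q) t^n/[n]_{p,q}! = F_{p,q}(t) · e_{p,q}(xt) holds in ℝ⟦t⟧, where F_{p,q}(t) = ∑_{m=0}^{∞} (−1)^m p^{m(m−1)} t^{2m}/[2m]_{p,q}!! and e_{p,q}(xt) = ∑_{n=0}^{∞} p^{n(n−1)/2} x^n t^n/[n]_{p,q}!. -/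

import Mathlib

noncomputable section
open Finset Polynomial

/-- The (p,q)-number `[n]_{p,q} = (p^n - q^n)/(p - q)`. -/
def pqNum (p q : ℝ) (n : ℕ) : ℝ := (p ^ n - q ^ n) / (p - q)

/-- The (p,q)-factorial `[n]_{p,q}! = ∏_{k=1}^n [k]_{p,q}`. -/
def pqFact (p q : ℝ) (n : ℕ) : ℝ := ∏ k ∈ Finset.Icc 1 n, pqNum p q k

/-- The (p,q)-binomial coefficient. -/
def pqBinom (p q : ℝ) (n k : ℕ) : ℝ := pqFact p q n / (pqFact p q k * pqFact p q (n - k))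

/-- The (p,q)-derivative on polynomials: the linear operator with `D(X^n) = [n]_{p,q} X^(n-1)`. -/
def pqDeriv (p q : ℝ) (f : Polynomial ℝ) : Polynomial ℝ :=
  f.sum fun n a => Polynomial.C (a * pqNum p q n) * Polynomial.X ^ (n - 1)

/-- The (p,q)-derivative on formal power series, acting coefficientwise by
`D(X^n) = [n]_{p,q} X^(n-1)`. -/
def pqDerivPS (p q : ℝ) (f : PowerSeries ℝ) : PowerSeries ℝ :=
  PowerSeries.mk fun n => pqNum p q (n + 1) * PowerSeries.coeff (n + 1) f

/-- The double (p,q)-factorial `[2m]_{p,q}!! = ∏_{k=1}^m [2k]_{p,q}`. -/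
def pqDoubleFact (p q : ℝ) (m : ℕ) : ℝ := ∏ k ∈ Finset.Icc 1 m, pqNum p q (2 * k)

/-- A sequence of real polynomials of exact degree `n` is (p,q)-Appell when
`D_{p,q} f_{n+1}(x) = [n+1]_{p,q} f_n(p x)` for all `n ≥ 0` and all `x`. -/
def IsPQAppell (p q : ℝ) (f : ℕ → Polynomial ℝ) : Prop :=
  (∀ n, (f n).natDegree = n) ∧
    ∀ (n : ℕ) (x : ℝ), (pqDeriv p q (f (n + 1))).eval x = pqNum p q (n + 1) * (f n).eval (p * x)

/-
The proof is a coefficient comparison: only the even terms `t^(2k)` of `F_{p,q}` contribute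
to the Cauchy product, so the coefficient of `t^n` on the right is the sum over
`k ≤ n/2` of the `k`-th coefficient of `F_{p,q}` times the `(n-2k)`-th of `e_{p,q}(xt)`,
which is `H_n(x)/[n]_{p,q}!` term by term since `p^a p^b = p^(a+b)`.
-/

theorem PowerSeries.coeff_mk_even_mul {R : Type*} [CommSemiring R] (a : ℕ → R)
    (g : PowerSeries R) (n : ℕ) :
    coeff n (mk (fun m => if Even m then a (m / 2) else 0) * g) =
      ∑ k ∈ range (n / 2 + 1), a k * coeff (n - 2 * k) g := by
  rw [coeff_mul, Nat.sum_antidiagonal_eq_sum_range_succ_mk]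
  simp only [coeff_mk, ite_mul, zero_mul]
  rw [← sum_filter]
  refine sum_nbij' (fun i => i / 2) (fun k => 2 * k) ?_ ?_ ?_ ?_ ?_
  · intro i hi
    simp only [mem_range, mem_filter] at hi ⊢
    omega
  · intro k hk
    simp only [mem_range, mem_filter] at hk ⊢
    exact ⟨by omega, even_two_mul k⟩
  · rintro i hi
    obtain ⟨-, m, rfl⟩ := mem_filter.1 hi
    omega
  · intro k _
    omega
  · intro i hi
    obtain ⟨-, m, rfl⟩ := mem_filter.1 hi
    rw [← two_mul, Nat.mul_div_cancel_left m two_pos]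

section PositiveParameters

variable {p q : ℝ}

lemma pqNum_pos (hq : 0 < q) (hpq : q < p) {n : ℕ} (hn : n ≠ 0) : 0 < pqNum p q n :=
  div_pos (sub_pos.2 (pow_lt_pow_left₀ hpq hq.le hn)) (sub_pos.2 hpq)

lemma pqFact_pos (hq : 0 < q) (hpq : q < p) (n : ℕ) : 0 < pqFact p q n :=
  prod_pos fun k hk => pqNum_pos hq hpq (by simp only [mem_Icc] at hk; omega)

lemma pqDoubleFact_pos (hq : 0 < q) (hpq : q < p) (m : ℕ) : 0 < pqDoubleFact p q m :=
  prod_pos fun k hk => pqNum_pos hq hpq (by simp only [mem_Icc] at hk; omega)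

end PositiveParameters

/-- the explicit representation of the (p,q)-Hermite polynomials satisfies
their generating identity. -/
theorem pq_hermite_representation (p q : ℝ) (hq : 0 < q) (hpq : q < p)
    (H : ℕ → ℝ → ℝ)
    (hH : ∀ (n : ℕ) (x : ℝ), H n x = ∑ k ∈ Finset.range (n / 2 + 1),
      (-1 : ℝ) ^ k * p ^ ((n - 2 * k) * (n - 2 * k - 1) / 2 + k * (k - 1)) *
        (pqFact p q n / (pqDoubleFact p q k * pqFact p q (n - 2 * k))) * x ^ (n - 2 * k)) :
    ∀ x : ℝ,
      (PowerSeries.mk fun n => H n x / pqFact p q n)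
        = (PowerSeries.mk fun n =>
            if Even n then
              (-1 : ℝ) ^ (n / 2) * p ^ ((n / 2) * (n / 2 - 1)) / pqDoubleFact p q (n / 2)
            else 0) *
          PowerSeries.mk fun n => p ^ (n * (n - 1) / 2) * x ^ n / pqFact p q n := by
  intro x
  ext n
  rw [PowerSeries.coeff_mk_even_mul (fun k => (-1 : ℝ) ^ k * p ^ (k * (k - 1)) /
    pqDoubleFact p q k), PowerSeries.coeff_mk, hH, sum_div]
  refine sum_congr rfl fun k _ => ?_
  have hDk := (pqDoubleFact_pos hq hpq k).ne'
  have hFn := (pqFact_pos hq hpq n).ne'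
  have hFnk := (pqFact_pos hq hpq (n - 2 * k)).ne'
  rw [PowerSeries.coeff_mk, pow_add]
  field_simp
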